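/- Fix finitely many data points ε_{ij} ∈ ℝ for i = 0,…,m and j = 1,…,n_i, with n = Σ_i n_i and ρ_r = n_r/n > 0 for r = 0,…,m, and a differentiable function q : ℝ → ℝ^{d₂} whose first component is identically 1. For θ = (θ_1,…,θ_m) with θ_0 = 0, define h(t;θ) = Σ_{r=0}^m ρ_r exp(θ_rᵀ q(t)) and the dual empirical log-likelihood ℓ̆_n(θ) = − Σ_{i,j} log h(ε_{ij};θ) + Σ_{i,j} θ_iᵀ q(ε_{ij}). Suppose θ̂ is a stationary point of ℓ̆_n (its gradient with respect to each θ_k, k = 1,…,m, vanishes at θ̂), and define p̂_{ij} = 1/(n h(ε_{ij}; θ̂)). Then for every k = 1,…,m, Σ_{i,j} p̂_{ij} exp(θ̂_kᵀ q(ε_{ij})) = 1, and moreover Σ_{i,j} p̂_{ij} = 1; consequently each fitted distribution Ĝ_k(t) = Σ_{i,j} p̂_{ij} exp(θ̂_kᵀ q(ε_{ij})) 1(ε_{ij} ≤ t) is a genuine probability distribution function. -/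

import Mathlib

open Finset Filter Topology

/-!
Since the first coordinate of `q` is `1`, moving the normalization parameter of `θ_k` by `s`
multiplies `exp (θ_kᵀ q)` by `eˢ`. Differentiating `ℓ̆_n` along that direction at `θ̂` gives
`Σ ρ_k exp (θ̂_kᵀ q (ε_{ij})) / h(ε_{ij}; θ̂) = n_k`, i.e. `Ĝ_k(∞) = 1`.
Summing `p̂_{ij} h(ε_{ij}; θ̂) = 1/n` over the sample gives `Σ_r ρ_r Ĝ_r(∞) = 1 = Σ_r ρ_r`,
which forces `Ĝ_0(∞) = Σ p̂_{ij} = 1`. Each `Ĝ_k` is then a step function with nonnegative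
jumps and total mass `1`.
-/

section WeightedStepFunction

variable {ι : Type*} [Fintype ι] (w x : ι → ℝ)

theorem monotone_sum_mul_ite_le (hw : ∀ a, 0 ≤ w a) :
    Monotone fun t => ∑ a, w a * if x a ≤ t then (1 : ℝ) else 0 := by
  intro s t hst
  refine sum_le_sum fun a _ => mul_le_mul_of_nonneg_left ?_ (hw a)
  split_ifs with hs ht <;> first | exact absurd (hs.trans hst) ht | norm_num

theorem tendsto_sum_mul_ite_le_atTop :
    Tendsto (fun t => ∑ a, w a * if x a ≤ t then (1 : ℝ) else 0) atTop (𝓝 (∑ a, w a)) := by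
  refine tendsto_finsetSum _ fun a _ => tendsto_const_nhds.congr' ?_
  filter_upwards [eventually_ge_atTop (x a)] with t ht
  simp [ht]

theorem tendsto_sum_mul_ite_le_atBot :
    Tendsto (fun t => ∑ a, w a * if x a ≤ t then (1 : ℝ) else 0) atBot (𝓝 0) := by
  simpa using tendsto_finsetSum (univ : Finset ι) fun a _ =>
    (tendsto_const_nhds (x := (0 : ℝ))).congr' <| by
      filter_upwards [eventually_lt_atBot (x a)] with t ht
      simp [not_le.2 ht]

end WeightedStepFunction

theorem Real.hasDerivAt_log_add_mul_exp_sub_one {c : ℝ} (hc : c ≠ 0) (b : ℝ) :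
    HasDerivAt (fun s => Real.log (c + b * (Real.exp s - 1))) (b / c) 0 := by
  have hlin : HasDerivAt (fun s => c + b * (Real.exp s - 1)) b 0 := by
    simpa using (((Real.hasDerivAt_exp 0).sub_const 1).const_mul b).const_add c
  simpa using hlin.log (by simpa using hc)

theorem Fin.eq_one_of_sum_mul_eq_one {m : ℕ} {ρ S : Fin (m + 1) → ℝ} (hρ0 : ρ 0 ≠ 0)
    (hρ : ∑ r, ρ r = 1) (hS : ∀ k : Fin m, S k.succ = 1) (h : ∑ r, ρ r * S r = 1) :
    S 0 = 1 := by
  rw [Fin.sum_univ_succ] at hρ h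
  simp only [hS, mul_one] at h
  exact mul_left_cancel₀ hρ0 (by linarith)

namespace DensityRatio

variable {m d : ℕ} (q : ℝ → Fin d → ℝ)

/-- `θ_rᵀ q(t)`, with the convention `θ_0 = 0`. -/
def tilt (θ : Fin m → Fin d → ℝ) (r : Fin (m + 1)) (t : ℝ) : ℝ :=
  ∑ i, (Fin.cons 0 θ : Fin (m + 1) → Fin d → ℝ) r i * q t i

@[simp] theorem tilt_zero (θ : Fin m → Fin d → ℝ) (t : ℝ) : tilt q θ 0 t = 0 := by
  simp [tilt]

@[simp] theorem tilt_succ (θ : Fin m → Fin d → ℝ) (k : Fin m) (t : ℝ) :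
    tilt q θ k.succ t = ∑ i, θ k i * q t i := by
  simp [tilt]

def normalizingDirection [NeZero d] (k : Fin m) : Fin m → Fin d → ℝ :=
  Pi.single k (Pi.single 0 1)

theorem tilt_add_smul_normalizingDirection [NeZero d] (hq1 : ∀ t, q t 0 = 1)
    (θ : Fin m → Fin d → ℝ) (k : Fin m) (s : ℝ) (r : Fin (m + 1)) (t : ℝ) :
    tilt q (θ + s • normalizingDirection k) r t =
      tilt q θ r t + if r = k.succ then s else 0 := by
  cases r using Fin.cases with
  | zero => simp [normalizingDirection, (Fin.succ_ne_zero k).symm]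
  | succ l =>
    by_cases hl : l = k
    · subst hl
      simp [normalizingDirection, Pi.single_apply, add_mul, sum_add_distrib, hq1]
    · simp [normalizingDirection, hl]

noncomputable def normalizer (ρ : Fin (m + 1) → ℝ) (t : ℝ) (θ : Fin m → Fin d → ℝ) : ℝ :=
  ∑ r, ρ r * Real.exp (tilt q θ r t)

theorem normalizer_pos {ρ : Fin (m + 1) → ℝ} (hρ : ∀ r, 0 < ρ r) (t : ℝ)
    (θ : Fin m → Fin d → ℝ) : 0 < normalizer q ρ t θ :=
  sum_pos (fun r _ => mul_pos (hρ r) (Real.exp_pos _)) univ_nonempty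

theorem normalizer_add_smul_normalizingDirection [NeZero d] (hq1 : ∀ t, q t 0 = 1)
    (ρ : Fin (m + 1) → ℝ) (t : ℝ) (θ : Fin m → Fin d → ℝ) (k : Fin m) (s : ℝ) :
    normalizer q ρ t (θ + s • normalizingDirection k) =
      normalizer q ρ t θ + ρ k.succ * Real.exp (tilt q θ k.succ t) * (Real.exp s - 1) := by
  have hterm : ∀ r, ρ r * Real.exp (tilt q (θ + s • normalizingDirection k) r t) =
      ρ r * Real.exp (tilt q θ r t) +
        if r = k.succ then ρ r * Real.exp (tilt q θ r t) * (Real.exp s - 1) else 0 := by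
    intro r
    rw [tilt_add_smul_normalizingDirection q hq1]
    split_ifs
    · rw [Real.exp_add]; ring
    · simp
  simp only [normalizer, hterm, sum_add_distrib, sum_ite_eq', mem_univ, if_true]

variable {nk : Fin (m + 1) → ℕ} (ρ : Fin (m + 1) → ℝ)
  (ε : (i : Fin (m + 1)) → Fin (nk i) → ℝ)

noncomputable def dualLogLik (θ : Fin m → Fin d → ℝ) : ℝ :=
  -(∑ i, ∑ j, Real.log (normalizer q ρ (ε i j) θ)) + ∑ i, ∑ j, tilt q θ i (ε i j)

theorem dualLogLik_add_smul_normalizingDirection [NeZero d] (hq1 : ∀ t, q t 0 = 1)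
    (θ : Fin m → Fin d → ℝ) (k : Fin m) (s : ℝ) :
    dualLogLik q ρ ε (θ + s • normalizingDirection k) =
      -(∑ i, ∑ j, Real.log (normalizer q ρ (ε i j) θ +
          ρ k.succ * Real.exp (tilt q θ k.succ (ε i j)) * (Real.exp s - 1))) +
        ((∑ i, ∑ j, tilt q θ i (ε i j)) + s * nk k.succ) := by
  simp only [dualLogLik, normalizer_add_smul_normalizingDirection q hq1,
    tilt_add_smul_normalizingDirection q hq1, sum_add_distrib, sum_const, card_univ,
    Fintype.card_fin, smul_ite, smul_zero, sum_ite_eq', mem_univ, if_true, nsmul_eq_mul,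
    mul_comm]

variable {ρ}

theorem hasDerivAt_dualLogLik_add_smul_normalizingDirection [NeZero d]
    (hq1 : ∀ t, q t 0 = 1) (hρ : ∀ r, 0 < ρ r) (θ : Fin m → Fin d → ℝ) (k : Fin m) :
    HasDerivAt (fun s : ℝ => dualLogLik q ρ ε (θ + s • normalizingDirection k))
      (-(∑ i, ∑ j, ρ k.succ * Real.exp (tilt q θ k.succ (ε i j)) / normalizer q ρ (ε i j) θ) +
        (nk k.succ : ℝ)) 0 := by
  simp only [dualLogLik_add_smul_normalizingDirection q ρ ε hq1]
  have hlog := fun i j => Real.hasDerivAt_log_add_mul_exp_sub_one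
    (normalizer_pos q hρ (ε i j) θ).ne' (ρ k.succ * Real.exp (tilt q θ k.succ (ε i j)))
  have hlin : HasDerivAt (fun s : ℝ => s * (nk k.succ : ℝ)) (nk k.succ) 0 := by
    simpa using (hasDerivAt_id (0 : ℝ)).mul_const (nk k.succ : ℝ)
  exact (HasDerivAt.fun_sum fun i _ => HasDerivAt.fun_sum fun j _ => hlog i j).neg.add
    (hlin.const_add _)

theorem sum_div_normalizer_eq_of_hasFDerivAt_zero [NeZero d] (hq1 : ∀ t, q t 0 = 1)
    (hρ : ∀ r, 0 < ρ r) {θ : Fin m → Fin d → ℝ}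
    (hstat : HasFDerivAt (dualLogLik q ρ ε) (0 : (Fin m → Fin d → ℝ) →L[ℝ] ℝ) θ) (k : Fin m) :
    ∑ i, ∑ j, ρ k.succ * Real.exp (tilt q θ k.succ (ε i j)) / normalizer q ρ (ε i j) θ =
      nk k.succ := by
  have hline : HasDerivAt (fun s : ℝ => θ + s • normalizingDirection k)
      (normalizingDirection k) 0 := by
    simpa using ((hasDerivAt_id (0 : ℝ)).smul_const (normalizingDirection k)).const_add θ
  have hzero := (show HasFDerivAt (dualLogLik q ρ ε) (0 : (Fin m → Fin d → ℝ) →L[ℝ] ℝ)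
    (θ + (0 : ℝ) • normalizingDirection k) by simpa using hstat).comp_hasDerivAt 0 hline
  have := hzero.unique (hasDerivAt_dualLogLik_add_smul_normalizingDirection q ε hq1 hρ θ k)
  simp only [zero_apply] at this
  linarith

/-- The total mass `Ĝ_r(∞)` of the fitted distribution of the `r`-th sample. -/
noncomputable def fittedMass (p : (i : Fin (m + 1)) → Fin (nk i) → ℝ) (θ : Fin m → Fin d → ℝ)
    (r : Fin (m + 1)) : ℝ :=
  ∑ i, ∑ j, p i j * Real.exp (tilt q θ r (ε i j))

noncomputable def fittedCDF (p : (i : Fin (m + 1)) → Fin (nk i) → ℝ) (θ : Fin m → Fin d → ℝ)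
    (r : Fin (m + 1)) (t : ℝ) : ℝ :=
  ∑ i, ∑ j, p i j * Real.exp (tilt q θ r (ε i j)) * if ε i j ≤ t then 1 else 0

variable {n : ℕ} {p : (i : Fin (m + 1)) → Fin (nk i) → ℝ} {θ : Fin m → Fin d → ℝ}

theorem fittedMass_succ_eq_one [NeZero d] (hq1 : ∀ t, q t 0 = 1) (hnk : ∀ i, 0 < nk i)
    (hn : 0 < n) (hρ : ∀ r, ρ r = (nk r : ℝ) / n)
    (hstat : HasFDerivAt (dualLogLik q ρ ε) (0 : (Fin m → Fin d → ℝ) →L[ℝ] ℝ) θ)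
    (hp : ∀ i j, p i j = 1 / (n * normalizer q ρ (ε i j) θ)) (k : Fin m) :
    fittedMass q ε p θ k.succ = 1 := by
  have hρpos : ∀ r, 0 < ρ r := fun r =>
    hρ r ▸ div_pos (Nat.cast_pos.2 (hnk r)) (Nat.cast_pos.2 hn)
  have hterm : ∀ i j, ρ k.succ * Real.exp (tilt q θ k.succ (ε i j)) / normalizer q ρ (ε i j) θ =
      nk k.succ * (p i j * Real.exp (tilt q θ k.succ (ε i j))) := by
    intro i j
    have := (normalizer_pos q hρpos (ε i j) θ).ne'
    rw [hp, hρ]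
    field_simp
  have key := sum_div_normalizer_eq_of_hasFDerivAt_zero q ε hq1 hρpos hstat k
  simp only [hterm, ← mul_sum] at key
  exact mul_left_cancel₀ (Nat.cast_pos.2 (hnk k.succ)).ne' (key.trans (mul_one _).symm)

theorem sum_mul_fittedMass_eq_one (hρ : ∀ r, 0 < ρ r)
    (hn : n = ∑ i, nk i) (hn0 : 0 < n)
    (hp : ∀ i j, p i j = 1 / (n * normalizer q ρ (ε i j) θ)) :
    ∑ r, ρ r * fittedMass q ε p θ r = 1 := by
  have hpN : ∀ i j, ∑ r, ρ r * (p i j * Real.exp (tilt q θ r (ε i j))) = 1 / n := by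
    intro i j
    have := (normalizer_pos q hρ (ε i j) θ).ne'
    calc ∑ r, ρ r * (p i j * Real.exp (tilt q θ r (ε i j)))
        = p i j * normalizer q ρ (ε i j) θ := by
          simp only [normalizer, mul_sum]; exact sum_congr rfl fun r _ => by ring
      _ = 1 / n := by rw [hp]; field_simp
  simp only [fittedMass, mul_sum]
  rw [sum_comm]
  simp only [sum_comm (γ := Fin (m + 1)), hpN]
  have hnR : (n : ℝ) ≠ 0 := Nat.cast_ne_zero.2 hn0.ne'
  simp only [sum_const, card_univ, Fintype.card_fin, nsmul_eq_mul, ← sum_mul]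
  rw [← Nat.cast_sum, ← hn, mul_one_div_cancel hnR]

section FittedCDF

variable (p : (i : Fin (m + 1)) → Fin (nk i) → ℝ) (θ : Fin m → Fin d → ℝ) (r : Fin (m + 1))

theorem fittedCDF_eq_sum_sigma (t : ℝ) :
    fittedCDF q ε p θ r t = ∑ a : (i : Fin (m + 1)) × Fin (nk i),
      p a.1 a.2 * Real.exp (tilt q θ r (ε a.1 a.2)) * if ε a.1 a.2 ≤ t then 1 else 0 := by
  rw [Fintype.sum_sigma]; rfl

theorem monotone_fittedCDF (hp : ∀ i j, 0 ≤ p i j) : Monotone (fittedCDF q ε p θ r) := by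
  simpa only [funext (fittedCDF_eq_sum_sigma q ε p θ r)] using
    monotone_sum_mul_ite_le (fun a : (i : Fin (m + 1)) × Fin (nk i) =>
      p a.1 a.2 * Real.exp (tilt q θ r (ε a.1 a.2))) (fun a => ε a.1 a.2) fun a =>
        mul_nonneg (hp a.1 a.2) (Real.exp_pos _).le

theorem tendsto_fittedCDF_atTop :
    Tendsto (fittedCDF q ε p θ r) atTop (𝓝 (fittedMass q ε p θ r)) := by
  simpa only [funext (fittedCDF_eq_sum_sigma q ε p θ r), fittedMass, Fintype.sum_sigma] using
    tendsto_sum_mul_ite_le_atTop (fun a : (i : Fin (m + 1)) × Fin (nk i) =>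
      p a.1 a.2 * Real.exp (tilt q θ r (ε a.1 a.2))) (fun a => ε a.1 a.2)

theorem tendsto_fittedCDF_atBot : Tendsto (fittedCDF q ε p θ r) atBot (𝓝 0) := by
  simpa only [funext (fittedCDF_eq_sum_sigma q ε p θ r)] using
    tendsto_sum_mul_ite_le_atBot (fun a : (i : Fin (m + 1)) × Fin (nk i) =>
      p a.1 a.2 * Real.exp (tilt q θ r (ε a.1 a.2))) (fun a => ε a.1 a.2)

end FittedCDF

end DensityRatio

theorem stationary_point_fitted_distributions_general {m d₂ : ℕ} [NeZero d₂]
    {nk : Fin (m + 1) → ℕ} (hnk : ∀ i, 0 < nk i)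
    (n : ℕ) (hn : n = ∑ i : Fin (m + 1), nk i)
    (ε : (i : Fin (m + 1)) → Fin (nk i) → ℝ)
    (q : ℝ → Fin d₂ → ℝ) (hq1 : ∀ t, q t 0 = 1)
    (ρ : Fin (m + 1) → ℝ) (hρ : ∀ r, ρ r = (nk r : ℝ) / (n : ℝ))
    (h : ℝ → (Fin m → Fin d₂ → ℝ) → ℝ)
    (hh : ∀ t θ, h t θ = ∑ r : Fin (m + 1),
      ρ r * Real.exp (∑ i, (Fin.cons 0 θ : Fin (m + 1) → Fin d₂ → ℝ) r i * q t i))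
    (ell : (Fin m → Fin d₂ → ℝ) → ℝ)
    (hell : ∀ θ, ell θ =
      - (∑ i : Fin (m + 1), ∑ j : Fin (nk i), Real.log (h (ε i j) θ))
      + ∑ i : Fin (m + 1), ∑ j : Fin (nk i),
          ∑ i' , (Fin.cons 0 θ : Fin (m + 1) → Fin d₂ → ℝ) i i' * q (ε i j) i')
    (θhat : Fin m → Fin d₂ → ℝ)
    (hstat : HasFDerivAt ell (0 : (Fin m → Fin d₂ → ℝ) →L[ℝ] ℝ) θhat)
    (phat : (i : Fin (m + 1)) → Fin (nk i) → ℝ)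
    (hphat : ∀ i j, phat i j = 1 / ((n : ℝ) * h (ε i j) θhat))
    (G : Fin (m + 1) → ℝ → ℝ)
    (hG : ∀ k t, G k t = ∑ i : Fin (m + 1), ∑ j : Fin (nk i),
      phat i j
        * Real.exp (∑ i', (Fin.cons 0 θhat : Fin (m + 1) → Fin d₂ → ℝ) k i' * q (ε i j) i')
        * (if ε i j ≤ t then (1 : ℝ) else 0)) :
    (∀ k : Fin m,
        ∑ i : Fin (m + 1), ∑ j : Fin (nk i),
          phat i j * Real.exp (∑ i', θhat k i' * q (ε i j) i') = 1) ∧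
      (∑ i : Fin (m + 1), ∑ j : Fin (nk i), phat i j = 1) ∧
      ∀ k : Fin (m + 1),
        Monotone (G k) ∧ Tendsto (G k) atTop (𝓝 1) ∧ Tendsto (G k) atBot (𝓝 0) := by
  have hn0 : 0 < n := hn ▸ sum_pos (fun i _ => hnk i) univ_nonempty
  have hρpos : ∀ r, 0 < ρ r := fun r =>
    hρ r ▸ div_pos (Nat.cast_pos.2 (hnk r)) (Nat.cast_pos.2 hn0)
  have hρsum : ∑ r, ρ r = 1 := by
    simp only [hρ, ← sum_div]
    rw [← Nat.cast_sum, ← hn, div_self (Nat.cast_ne_zero.2 hn0.ne')]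
  have hell' : ell = DensityRatio.dualLogLik q ρ ε := funext fun θ => by
    simp only [hell, hh]; rfl
  have hphat' : ∀ i j, phat i j = 1 / (n * DensityRatio.normalizer q ρ (ε i j) θhat) :=
    fun i j => by rw [hphat, hh]; rfl
  have hphat_pos : ∀ i j, 0 ≤ phat i j := fun i j => hphat' i j ▸
    (one_div_pos.2 (mul_pos (Nat.cast_pos.2 hn0) (DensityRatio.normalizer_pos q hρpos _ _))).le
  have hsucc := DensityRatio.fittedMass_succ_eq_one q ε hq1 hnk hn0 hρ (hell' ▸ hstat) hphat'
  have hzero : DensityRatio.fittedMass q ε phat θhat 0 = 1 :=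
    Fin.eq_one_of_sum_mul_eq_one (hρpos 0).ne' hρsum hsucc
      (DensityRatio.sum_mul_fittedMass_eq_one q ε hρpos hn hn0 hphat')
  refine ⟨fun k => by simpa [DensityRatio.fittedMass] using hsucc k,
    by simpa [DensityRatio.fittedMass] using hzero, fun k => ?_⟩
  have hG' : G k = DensityRatio.fittedCDF q ε phat θhat k := funext (hG k)
  have hmass : DensityRatio.fittedMass q ε phat θhat k = 1 := Fin.cases hzero hsucc k
  rw [hG']
  exact ⟨DensityRatio.monotone_fittedCDF q ε phat θhat k hphat_pos,
    hmass ▸ DensityRatio.tendsto_fittedCDF_atTop q ε phat θhat k,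
    DensityRatio.tendsto_fittedCDF_atBot q ε phat θhat k⟩

/-- **Stationary points of the dual empirical log-likelihood yield genuine fitted
distributions.** If `θ̂` is a stationary point of the dual empirical log-likelihood
`ℓ̆_n θ = − Σ_{i,j} log h(ε_{ij}; θ) + Σ_{i,j} θ_iᵀ q(ε_{ij})` (with `θ_0 = 0`,
`h(t;θ) = Σ_r ρ_r exp (θ_rᵀ q t)`, `ρ_r = n_r/n`), and `p̂_{ij} = 1/(n h(ε_{ij}; θ̂))`,
then `Σ p̂_{ij} exp (θ̂_kᵀ q (ε_{ij})) = 1` for each `k = 1, …, m`, `Σ p̂_{ij} = 1`, and each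
fitted `Ĝ_k(t) = Σ p̂_{ij} exp (θ̂_kᵀ q (ε_{ij})) 1(ε_{ij} ≤ t)` is a genuine probability
distribution function. -/
theorem stationary_point_fitted_distributions {m d₂ : ℕ} [NeZero d₂]
    {nk : Fin (m + 1) → ℕ} (hnk : ∀ i, 0 < nk i)
    (n : ℕ) (hn : n = ∑ i : Fin (m + 1), nk i)
    (ε : (i : Fin (m + 1)) → Fin (nk i) → ℝ)
    (q : ℝ → Fin d₂ → ℝ) (hq_diff : Differentiable ℝ q) (hq1 : ∀ t, q t 0 = 1)
    (ρ : Fin (m + 1) → ℝ) (hρ : ∀ r, ρ r = (nk r : ℝ) / (n : ℝ))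
    (h : ℝ → (Fin m → Fin d₂ → ℝ) → ℝ)
    (hh : ∀ t θ, h t θ = ∑ r : Fin (m + 1),
      ρ r * Real.exp (∑ i, (Fin.cons 0 θ : Fin (m + 1) → Fin d₂ → ℝ) r i * q t i))
    (ell : (Fin m → Fin d₂ → ℝ) → ℝ)
    (hell : ∀ θ, ell θ =
      - (∑ i : Fin (m + 1), ∑ j : Fin (nk i), Real.log (h (ε i j) θ))
      + ∑ i : Fin (m + 1), ∑ j : Fin (nk i),
          ∑ i' , (Fin.cons 0 θ : Fin (m + 1) → Fin d₂ → ℝ) i i' * q (ε i j) i')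
    (θhat : Fin m → Fin d₂ → ℝ)
    (hstat : HasFDerivAt ell (0 : (Fin m → Fin d₂ → ℝ) →L[ℝ] ℝ) θhat)
    (phat : (i : Fin (m + 1)) → Fin (nk i) → ℝ)
    (hphat : ∀ i j, phat i j = 1 / ((n : ℝ) * h (ε i j) θhat))
    (G : Fin (m + 1) → ℝ → ℝ)
    (hG : ∀ k t, G k t = ∑ i : Fin (m + 1), ∑ j : Fin (nk i),
      phat i j
        * Real.exp (∑ i', (Fin.cons 0 θhat : Fin (m + 1) → Fin d₂ → ℝ) k i' * q (ε i j) i')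
        * (if ε i j ≤ t then (1 : ℝ) else 0)) :
    (∀ k : Fin m,
        ∑ i : Fin (m + 1), ∑ j : Fin (nk i),
          phat i j * Real.exp (∑ i', θhat k i' * q (ε i j) i') = 1) ∧
      (∑ i : Fin (m + 1), ∑ j : Fin (nk i), phat i j = 1) ∧
      ∀ k : Fin (m + 1),
        Monotone (G k) ∧ Tendsto (G k) atTop (𝓝 1) ∧ Tendsto (G k) atBot (𝓝 0) :=
  stationary_point_fitted_distributions_general hnk n hn ε q hq1 ρ hρ h hh ell hell θhat hstat phat
    hphat G hG
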